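/- arXiv:1407.1296 — 5 statements merged into one kernel-verified Lean document; each statement's English description precedes it below -/
import Mathlib

section
/- Let n ≥ 1 be an integer and μ ∈ [0,1]. Define sequences (α_k) and (γ_k) by choosing γ_0 ∈ (0,1] with γ_0 ≥ μ, letting α_k ∈ (0, 1/n] be the solution of n²α_k² = (1-α_k)γ_k + α_k μ, and γ_{k+1} = (1-α_k)γ_k + α_k μ. Then for all k ≥ 0, √μ/n ≤ α_k ≤ 1/n and μ ≤ γ_k ≤ 1. -/
/-! Since `γ (k+1)` is a convex combination of `γ k` and `μ`, induction keeps `γ k` in `[μ, 1]`;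
then `n² α_k² = γ (k+1) ≥ μ` gives the lower bound on `α k`. -/

open Set

lemma sub_mul_add_mul_mem_Icc {a b x t : ℝ} (hab : a ≤ b) (hx : x ∈ Icc a b)
    (ht₀ : 0 ≤ t) (ht₁ : t ≤ 1) : (1 - t) * x + t * a ∈ Icc a b := by
  simpa only [smul_eq_mul] using
    convex_Icc a b hx ⟨le_rfl, hab⟩ (sub_nonneg.2 ht₁) ht₀ (sub_add_cancel 1 t)

lemma sqrt_div_le_of_le_sq_mul_sq {μ n a : ℝ} (hn : 0 < n) (ha : 0 ≤ a)
    (h : μ ≤ n ^ 2 * a ^ 2) : √μ / n ≤ a := by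
  rw [div_le_iff₀' hn, Real.sqrt_le_left (by positivity), mul_pow]
  exact h

theorem stmt_1_general (n : ℕ) (hn : 1 ≤ n) (μ : ℝ) (hμ1 : μ ≤ 1)
    (α γ : ℕ → ℝ)
    (hγ0le : γ 0 ≤ 1) (hγ0ge : μ ≤ γ 0)
    (hαpos : ∀ k, 0 < α k) (hαle : ∀ k, α k ≤ 1 / n)
    (hαeq : ∀ k, (n : ℝ) ^ 2 * (α k) ^ 2 = (1 - α k) * γ k + α k * μ)
    (hγrec : ∀ k, γ (k + 1) = (1 - α k) * γ k + α k * μ) :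
    ∀ k, Real.sqrt μ / n ≤ α k ∧ α k ≤ 1 / n ∧ μ ≤ γ k ∧ γ k ≤ 1 := by
  have hnpos : (0 : ℝ) < n := by exact_mod_cast hn
  have hα₁ (k : ℕ) : α k ≤ 1 :=
    (hαle k).trans (div_le_one_of_le₀ (by exact_mod_cast hn) hnpos.le)
  have hγ (k : ℕ) : γ k ∈ Icc μ 1 := by
    induction k with
    | zero => exact ⟨hγ0ge, hγ0le⟩
    | succ k ih => rw [hγrec k]; exact sub_mul_add_mul_mem_Icc hμ1 ih (hαpos k).le (hα₁ k)
  intro k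
  have hμα : μ ≤ (n : ℝ) ^ 2 * α k ^ 2 := by
    rw [hαeq k, ← hγrec k]
    exact (hγ (k + 1)).1
  exact ⟨sqrt_div_le_of_le_sq_mul_sq hnpos (hαpos k).le hμα, hαle k, hγ k⟩

/-- Bounds √μ/n ≤ α_k ≤ 1/n and μ ≤ γ_k ≤ 1 for the APCG parameter sequences. -/
theorem stmt_1 (n : ℕ) (hn : 1 ≤ n) (μ : ℝ) (hμ0 : 0 ≤ μ) (hμ1 : μ ≤ 1)
    (α γ : ℕ → ℝ)
    (hγ0pos : 0 < γ 0) (hγ0le : γ 0 ≤ 1) (hγ0ge : μ ≤ γ 0)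
    (hαpos : ∀ k, 0 < α k) (hαle : ∀ k, α k ≤ 1 / n)
    (hαeq : ∀ k, (n : ℝ) ^ 2 * (α k) ^ 2 = (1 - α k) * γ k + α k * μ)
    (hγrec : ∀ k, γ (k + 1) = (1 - α k) * γ k + α k * μ) :
    ∀ k, Real.sqrt μ / n ≤ α k ∧ α k ≤ 1 / n ∧ μ ≤ γ k ∧ γ k ≤ 1 :=
  stmt_1_general n hn μ hμ1 α γ hγ0le hγ0ge hαpos hαle hαeq hγrec
end

section
/- Under the same recursive construction (n²α_k² = (1-α_k)γ_k + α_k μ and γ_{k+1} = (1-α_k)γ_k + α_k μ with μ ≤ γ_0 ≤ 1, μ ∈ [0,1]), both sequences (α_k) and (γ_k) are non-increasing. -/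
/-- The sequences (α_k) and (γ_k) are non-increasing. -/
theorem stmt_2 (n : ℕ) (hn : 1 ≤ n) (μ : ℝ) (hμ0 : 0 ≤ μ) (hμ1 : μ ≤ 1)
    (α γ : ℕ → ℝ)
    (hγ0pos : 0 < γ 0) (hγ0le : γ 0 ≤ 1) (hγ0ge : μ ≤ γ 0)
    (hαpos : ∀ k, 0 < α k) (hαle : ∀ k, α k ≤ 1 / n)
    (hαeq : ∀ k, (n : ℝ) ^ 2 * (α k) ^ 2 = (1 - α k) * γ k + α k * μ)
    (hγrec : ∀ k, γ (k + 1) = (1 - α k) * γ k + α k * μ) :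
    (∀ k, α (k + 1) ≤ α k) ∧ (∀ k, γ (k + 1) ≤ γ k) := by
  have hn1 : (1 : ℝ) ≤ n := by exact_mod_cast hn
  have hα1 : ∀ k, α k ≤ 1 := fun k => le_trans (hαle k) (by
    rw [div_le_one (by linarith)]; exact hn1)
  have hγge : ∀ k, μ ≤ γ k := by
    intro k
    induction k with
    | zero => exact hγ0ge
    | succ k ih =>
      rw [hγrec k]
      nlinarith [hα1 k, (hαpos k).le]
  have hγmono : ∀ k, γ (k + 1) ≤ γ k := by
    intro k
    rw [hγrec k]
    nlinarith [hγge k, (hαpos k).le]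
  refine ⟨fun k => ?_, hγmono⟩
  by_contra h
  push_neg at h
  have e1 := hαeq k
  have e2 := hαeq (k + 1)
  have e3 := hγmono k
  have s1 : (1 - α (k+1)) * γ (k+1) ≤ (1 - α (k+1)) * γ k :=
    mul_le_mul_of_nonneg_left e3 (by linarith [hα1 (k+1)])
  have s2 : (1 - α (k+1)) * γ k + α (k+1) * μ ≤ (1 - α k) * γ k + α k * μ := by
    nlinarith [hγge k]
  have s3 : (n:ℝ) ^ 2 * α (k+1) ^ 2 ≤ (n:ℝ) ^ 2 * α k ^ 2 := by linarith
  have hn2 : (1:ℝ) ≤ (n:ℝ) ^ 2 := by nlinarith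
  nlinarith [mul_pos (sub_pos.mpr h) (add_pos (hαpos (k+1)) (hαpos k))]
end

section
/- Let λ_k = ∏_{i=0}^{k-1}(1-α_i) where the sequence (α_k) satisfies α_k ∈ (0, 1/n], γ_{k+1} = n²α_k², γ_{k+1} ≥ (1-α_k)γ_k, and γ_0 ∈ (0,1]. Then λ_k ≤ (2n / (2n + k√γ_0))² for all k ≥ 0. -/
/-! With `s = √γ₀` and `λ_k = ∏_{i<k} (1 - α_i)`, induction gives `γ₀ λ_k ≤ γ_k`, hence
`s √λ_{k+1} ≤ √γ_{k+1} = n α_k`. Combined with `√(1 - α) ≤ 1 - α/2` this shows that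
`(2n + k s) √λ_k ≤ 2n` is preserved from `k` to `k + 1`, which is the claim after squaring. -/

open Finset Real

lemma sqrt_one_sub_le_one_sub_half {a : ℝ} (ha : a ≤ 1) : √(1 - a) ≤ 1 - a / 2 :=
  (sqrt_le_left (by linarith)).2 (by nlinarith [sq_nonneg a])

lemma add_mul_sqrt_mul_one_sub_le {t s c P a : ℝ} (ht : 0 ≤ t) (ha : a ≤ 1)
    (hP : t * √P ≤ c) (hs : s * √(P * (1 - a)) ≤ c * a / 2) :
    (t + s) * √(P * (1 - a)) ≤ c := by
  have htP : 0 ≤ t * √P := by positivity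
  have hmain : t * √(P * (1 - a)) ≤ c * (1 - a / 2) := by
    rw [sqrt_mul' P (by linarith), ← mul_assoc]
    calc t * √P * √(1 - a) ≤ t * √P * (1 - a / 2) :=
          mul_le_mul_of_nonneg_left (sqrt_one_sub_le_one_sub_half ha) htP
      _ ≤ c * (1 - a / 2) := mul_le_mul_of_nonneg_right hP (by linarith)
  linarith

section

variable {α γ : ℕ → ℝ}

lemma mul_prod_one_sub_le (hα : ∀ k, α k ≤ 1) (hγ : ∀ k, (1 - α k) * γ k ≤ γ (k + 1)) (k : ℕ) :
    γ 0 * ∏ i ∈ range k, (1 - α i) ≤ γ k := by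
  induction k with
  | zero => simp
  | succ k ih =>
    calc γ 0 * ∏ i ∈ range (k + 1), (1 - α i)
        = (1 - α k) * (γ 0 * ∏ i ∈ range k, (1 - α i)) := by rw [prod_range_succ]; ring
      _ ≤ (1 - α k) * γ k := mul_le_mul_of_nonneg_left ih (by linarith [hα k])
      _ ≤ γ (k + 1) := hγ k

lemma add_mul_sqrt_prod_one_sub_le {n : ℝ} (hn : 0 ≤ n) (hγ₀ : 0 ≤ γ 0)
    (hα₀ : ∀ k, 0 ≤ α k) (hα₁ : ∀ k, α k ≤ 1)
    (hγeq : ∀ k, γ (k + 1) = n ^ 2 * α k ^ 2)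
    (hγge : ∀ k, (1 - α k) * γ k ≤ γ (k + 1)) (k : ℕ) :
    (2 * n + k * √(γ 0)) * √(∏ i ∈ range k, (1 - α i)) ≤ 2 * n := by
  induction k with
  | zero => simp
  | succ k ih =>
    have hstep : √(γ 0) * √(∏ i ∈ range (k + 1), (1 - α i)) ≤ 2 * n * α k / 2 := by
      rw [← sqrt_mul hγ₀]
      calc √(γ 0 * ∏ i ∈ range (k + 1), (1 - α i)) ≤ √(γ (k + 1)) :=
            sqrt_le_sqrt (mul_prod_one_sub_le hα₁ hγge (k + 1))
        _ = 2 * n * α k / 2 := by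
          rw [hγeq, ← mul_pow, sqrt_sq (mul_nonneg hn (hα₀ k))]; ring
    rw [prod_range_succ] at hstep ⊢
    push_cast
    rw [add_one_mul, ← add_assoc]
    exact add_mul_sqrt_mul_one_sub_le (by positivity) (hα₁ k) ih hstep

end

theorem stmt_5_general (n : ℕ) (hn : 1 ≤ n) (α γ : ℕ → ℝ)
    (hγ0pos : 0 < γ 0)
    (hαpos : ∀ k, 0 < α k) (hαle : ∀ k, α k ≤ 1 / n)
    (hγeq : ∀ k, γ (k + 1) = (n : ℝ) ^ 2 * (α k) ^ 2)
    (hγge : ∀ k, (1 - α k) * γ k ≤ γ (k + 1)) :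
    ∀ k : ℕ, ∏ i ∈ Finset.range k, (1 - α i) ≤
      (2 * n / (2 * n + k * Real.sqrt (γ 0))) ^ 2 := by
  intro k
  have hn' : (1 : ℝ) ≤ n := by exact_mod_cast hn
  have hα₁ : ∀ k, α k ≤ 1 := fun k => (hαle k).trans (div_le_one_of_le₀ hn' (by positivity))
  have hden : 0 < 2 * (n : ℝ) + k * √(γ 0) := by positivity
  have hbound := add_mul_sqrt_prod_one_sub_le (by positivity) hγ0pos.le
    (fun k => (hαpos k).le) hα₁ hγeq hγge k
  rw [← sqrt_le_left (by positivity), le_div_iff₀ hden, mul_comm]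
  exact hbound

/-- Sublinear bound λ_k ≤ (2n/(2n + k√γ₀))². -/
theorem stmt_5 (n : ℕ) (hn : 1 ≤ n) (α γ : ℕ → ℝ)
    (hγ0pos : 0 < γ 0) (hγ0le : γ 0 ≤ 1)
    (hαpos : ∀ k, 0 < α k) (hαle : ∀ k, α k ≤ 1 / n)
    (hγeq : ∀ k, γ (k + 1) = (n : ℝ) ^ 2 * (α k) ^ 2)
    (hγge : ∀ k, (1 - α k) * γ k ≤ γ (k + 1)) :
    ∀ k : ℕ, ∏ i ∈ Finset.range k, (1 - α i) ≤
      (2 * n / (2 * n + k * Real.sqrt (γ 0))) ^ 2 :=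
  stmt_5_general n hn α γ hγ0pos hαpos hαle hγeq hγge
end

section
/- Let each φ_i : ℝ → ℝ be convex, differentiable, and 1/γ-smooth (its derivative is 1/γ-Lipschitz). Let P(w) = (1/n)Σ_i φ_i(A_iᵀ w) + λ g(w), and let Φ(x, a, w) = (1/n)Σ_i φ_i(a_i) + λ g(w) - (1/n)Σ_i x_i(A_iᵀ w - a_i) with D(x) = min_{a,w} Φ(x,a,w). Given x, let a_i satisfy φ_i'(a_i) = -x_i for each i, and let w attain the minimum over w (i.e., Φ(x, a, w) = D(x)). Then P(w) - D(x) ≤ (1/(2nγ)) Σ_{i=1}^n (A_iᵀ w - a_i)². -/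
open RealInnerProductSpace

/-!
Since `φ_i'(a_i) = -x_i`, the gap `P(w) - Φ(x, a, w)` is `1/n` times the sum of the first-order
Taylor remainders `φ_i(⟪A_i, w⟫) - φ_i(a_i) - φ_i'(a_i)(⟪A_i, w⟫ - a_i)`, and the descent lemma
bounds each of them by `(1/(2γ)) (⟪A_i, w⟫ - a_i)²`.
-/

/-- The descent lemma. The gap to the tangent parabola has derivative `f' t - f' a - L (t - a)`,
which the Lipschitz bound makes `≤ 0` to the right of `a` and `≥ 0` to the left. -/
theorem le_add_deriv_mul_add_sq_of_abs_deriv_sub_le {f f' : ℝ → ℝ} {L : ℝ}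
    (hf : ∀ t, HasDerivAt f (f' t) t) (hf' : ∀ u v, |f' u - f' v| ≤ L * |u - v|) (a u : ℝ) :
    f u ≤ f a + f' a * (u - a) + L / 2 * (u - a) ^ 2 := by
  set h : ℝ → ℝ := fun t ↦ f t - f a - f' a * (t - a) - L / 2 * (t - a) ^ 2
  have hh : ∀ t, HasDerivAt h (f' t - f' a - L * (t - a)) t := fun t ↦ by
    have hlin := (hasDerivAt_id t).sub_const a
    refine ((((hf t).sub_const (f a)).sub (hlin.const_mul (f' a))).sub
      ((hlin.pow 2).const_mul (L / 2))).congr_deriv ?_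
    simp only [id_eq]
    ring
  have hcont : Continuous h := continuous_iff_continuousAt.2 fun t ↦ (hh t).continuousAt
  suffices h u ≤ h a by simp only [h, sub_self] at this; nlinarith
  rcases le_total a u with hau | hua
  · refine antitoneOn_of_hasDerivWithinAt_nonpos (convex_Ici a) hcont.continuousOn
      (fun t _ ↦ (hh t).hasDerivWithinAt) (fun t ht ↦ ?_) Set.self_mem_Ici hau hau
    rw [interior_Ici] at ht
    have := hf' t a
    rw [abs_of_pos (sub_pos.2 (Set.mem_Ioi.1 ht) : 0 < t - a)] at this
    linarith [le_abs_self (f' t - f' a)]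
  · refine monotoneOn_of_hasDerivWithinAt_nonneg (convex_Iic a) hcont.continuousOn
      (fun t _ ↦ (hh t).hasDerivWithinAt) (fun t ht ↦ ?_) hua Set.self_mem_Iic hua
    rw [interior_Iic] at ht
    have := hf' t a
    rw [abs_of_neg (sub_neg.2 (Set.mem_Iio.1 ht) : t - a < 0)] at this
    linarith [neg_abs_le (f' t - f' a)]

theorem stmt_11_general (d n : ℕ)
    (A : Fin n → EuclideanSpace ℝ (Fin d))
    (lam gam : ℝ)
    (φ : Fin n → ℝ → ℝ) (φ' : Fin n → ℝ → ℝ)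
    (hφd : ∀ i t, HasDerivAt (φ i) (φ' i t) t)
    (hφsmooth : ∀ i u v, |φ' i u - φ' i v| ≤ (1 / gam) * |u - v|)
    (g : EuclideanSpace ℝ (Fin d) → ℝ)
    (P : EuclideanSpace ℝ (Fin d) → ℝ)
    (hP : ∀ w, P w = (1 / n) * ∑ i, φ i ⟪A i, w⟫ + lam * g w)
    (Φ : (Fin n → ℝ) → (Fin n → ℝ) → EuclideanSpace ℝ (Fin d) → ℝ)
    (hΦ : ∀ x a w, Φ x a w = (1 / n) * ∑ i, φ i (a i) + lam * g w
      - (1 / n) * ∑ i, x i * (⟪A i, w⟫ - a i))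
    (x a : Fin n → ℝ) (w : EuclideanSpace ℝ (Fin d))
    (D : ℝ) (hD : D = Φ x a w)
    (ha : ∀ i, φ' i (a i) = - x i) :
    P w - D ≤ (1 / (2 * n * gam)) * ∑ i, (⟪A i, w⟫ - a i) ^ 2 := by
  have hterm : ∀ i, φ i ⟪A i, w⟫ - φ i (a i) + x i * (⟪A i, w⟫ - a i)
      ≤ 1 / (2 * gam) * (⟪A i, w⟫ - a i) ^ 2 := fun i ↦ by
    have := le_add_deriv_mul_add_sq_of_abs_deriv_sub_le (hφd i) (hφsmooth i) (a i) ⟪A i, w⟫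
    rw [ha i, div_div, mul_comm gam] at this
    linarith
  calc P w - D = (1 / n) * ∑ i, (φ i ⟪A i, w⟫ - φ i (a i) + x i * (⟪A i, w⟫ - a i)) := by
        rw [hP, hD, hΦ, Finset.sum_add_distrib, Finset.sum_sub_distrib]
        ring
    _ ≤ (1 / n) * ∑ i, 1 / (2 * gam) * (⟪A i, w⟫ - a i) ^ 2 := by
        gcongr with i
        exact hterm i
    _ = (1 / (2 * n * gam)) * ∑ i, (⟪A i, w⟫ - a i) ^ 2 := by
        rw [← Finset.mul_sum]
        ring

/-- Primal-dual gap bound: P(w) - D(x) ≤ (1/(2nγ)) Σ (A_iᵀ w - a_i)². -/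
theorem stmt_11 (d n : ℕ) (hn : 1 ≤ n)
    (A : Fin n → EuclideanSpace ℝ (Fin d))
    (lam gam : ℝ) (hlam : 0 < lam) (hgam : 0 < gam)
    (φ : Fin n → ℝ → ℝ) (φ' : Fin n → ℝ → ℝ)
    (hφconv : ∀ i, ConvexOn ℝ Set.univ (φ i))
    (hφd : ∀ i t, HasDerivAt (φ i) (φ' i t) t)
    (hφsmooth : ∀ i u v, |φ' i u - φ' i v| ≤ (1 / gam) * |u - v|)
    (g : EuclideanSpace ℝ (Fin d) → ℝ) (hg : ConvexOn ℝ Set.univ g)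
    (P : EuclideanSpace ℝ (Fin d) → ℝ)
    (hP : ∀ w, P w = (1 / n) * ∑ i, φ i ⟪A i, w⟫ + lam * g w)
    (Φ : (Fin n → ℝ) → (Fin n → ℝ) → EuclideanSpace ℝ (Fin d) → ℝ)
    (hΦ : ∀ x a w, Φ x a w = (1 / n) * ∑ i, φ i (a i) + lam * g w
      - (1 / n) * ∑ i, x i * (⟪A i, w⟫ - a i))
    (x a : Fin n → ℝ) (w : EuclideanSpace ℝ (Fin d))
    (D : ℝ) (hD : D = Φ x a w)
    (hmin : ∀ a' w', D ≤ Φ x a' w')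
    (ha : ∀ i, φ' i (a i) = - x i) :
    P w - D ≤ (1 / (2 * n * gam)) * ∑ i, (⟪A i, w⟫ - a i) ^ 2 :=
  stmt_11_general d n A lam gam φ φ' hφd hφsmooth g P hP Φ hΦ x a w D hD ha
end

section
/- Equivalence of APCG iterates (strongly convex case): suppose sequences x^{(k)}, y^{(k)}, z^{(k)} follow the recursions y^{(k)} = (x^{(k)} + α z^{(k)})/(1+α), z^{(k+1)} = (1-α)z^{(k)} + α y^{(k)} + U_{i_k} h^{(k)}, x^{(k+1)} = y^{(k)} + nα(z^{(k+1)} - z^{(k)}) + nα²(z^{(k)} - y^{(k)}), with x^{(0)} = z^{(0)}. Define ρ = (1-α)/(1+α), u^{(0)} = 0, v^{(0)} = x^{(0)}, and recursively u^{(k+1)} = u^{(k)} - ((1-nα)/(2ρ^{k+1})) U_{i_k} h^{(k)}, v^{(k+1)} = v^{(k)} + ((1+nα)/2) U_{i_k} h^{(k)}. Then for all k: x^{(k)} = ρ^k u^{(k)} + v^{(k)}, y^{(k)} = ρ^{k+1} u^{(k)} + v^{(k)}, z^{(k)} = -ρ^k u^{(k)} + v^{(k)}. -/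
/-!
Writing `p k = ρ^k • u k` turns the recursion for `u` into the linear recursion
`p (k+1) = ρ • p k - ((1 - nα)/2) • w k`, after which an induction goes through: `y k` is
determined by `x k` and `z k`, and the identity `ρ (1 + α) = 1 - α` makes the updates of `z` and
`x` match those of `p` and `v`. The junk value of `(1 - nα) / (2 ρ^(k+1))` at `ρ = 0` is harmless:
then `α = 1`, hence `n = 1` and the numerator vanishes as well.
-/

lemma mul_div_mul_cancel_right_of_imp {K : Type*} [Field K] {a b c : K} (h : a = 0 → c = 0) :
    a * (c / (b * a)) = c / b := by
  by_cases ha : a = 0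
  · simp [ha, h ha]
  · field_simp

lemma Nat.eq_one_of_one_le_one_div_cast {n : ℕ} (h : (1 : ℝ) ≤ 1 / n) : n = 1 := by
  have hn : n ≠ 0 := by rintro rfl; norm_num at h
  have hn' : (0 : ℝ) < n := by positivity
  rw [le_div_iff₀ hn', one_mul] at h
  exact_mod_cast le_antisymm (by exact_mod_cast h) (Nat.one_le_iff_ne_zero.mpr hn)

section APCG

variable {V : Type*} [AddCommGroup V] [Module ℝ V] {α β ρ : ℝ}

lemma apcg_y_eq (hα : 1 + α ≠ 0) (hρ : ρ = (1 - α) / (1 + α)) {x y z p v : V}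
    (hy : y = (1 / (1 + α)) • (x + α • z)) (hx : x = p + v) (hz : z = -p + v) :
    y = ρ • p + v := by
  rw [hy, hx, hz, hρ]
  match_scalars
  · field_simp; ring
  · field_simp

lemma apcg_z_succ (hα : 1 + α ≠ 0) (hρ : ρ = (1 - α) / (1 + α)) {y z z' p p' v v' w : V}
    (hz' : z' = (1 - α) • z + α • y + w) (hy : y = ρ • p + v) (hz : z = -p + v)
    (hp' : p' = ρ • p - ((1 - β) / 2) • w) (hv' : v' = v + ((1 + β) / 2) • w) :
    z' = -p' + v' := by
  rw [hz', hy, hz, hp', hv', hρ]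
  match_scalars <;> field_simp <;> ring

lemma apcg_x_succ (hα : 1 + α ≠ 0) (hρ : ρ = (1 - α) / (1 + α)) {x' y z z' p p' v v' w : V}
    (hx' : x' = y + β • (z' - z) + (β * α) • (z - y)) (hy : y = ρ • p + v) (hz : z = -p + v)
    (hz' : z' = -p' + v') (hp' : p' = ρ • p - ((1 - β) / 2) • w)
    (hv' : v' = v + ((1 + β) / 2) • w) :
    x' = p' + v' := by
  rw [hx', hy, hz, hz', hp', hv', hρ]
  match_scalars <;> field_simp <;> ring

theorem apcg_iterates_eq_of_scaled (hα : 1 + α ≠ 0) (hρ : ρ = (1 - α) / (1 + α))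
    {x y z p v w : ℕ → V} (hx0 : x 0 = z 0) (hp0 : p 0 = 0) (hv0 : v 0 = x 0)
    (hy : ∀ k, y k = (1 / (1 + α)) • (x k + α • z k))
    (hz : ∀ k, z (k + 1) = (1 - α) • z k + α • y k + w k)
    (hx : ∀ k, x (k + 1) = y k + β • (z (k + 1) - z k) + (β * α) • (z k - y k))
    (hp : ∀ k, p (k + 1) = ρ • p k - ((1 - β) / 2) • w k)
    (hv : ∀ k, v (k + 1) = v k + ((1 + β) / 2) • w k) (k : ℕ) :
    x k = p k + v k ∧ y k = ρ • p k + v k ∧ z k = -p k + v k := by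
  suffices hxz : x k = p k + v k ∧ z k = -p k + v k from
    ⟨hxz.1, apcg_y_eq hα hρ (hy k) hxz.1 hxz.2, hxz.2⟩
  induction k with
  | zero => exact ⟨by simp [hp0, hv0], by simp [hp0, hv0, hx0]⟩
  | succ k ih =>
    have hyk := apcg_y_eq hα hρ (hy k) ih.1 ih.2
    have hzk' := apcg_z_succ hα hρ (hz k) hyk ih.2 (hp k) (hv k)
    exact ⟨apcg_x_succ hα hρ (hx k) hyk ih.2 hzk' (hp k) (hv k), hzk'⟩

end APCG

theorem stmt_13_general (V : Type*) [AddCommGroup V] [Module ℝ V]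
    (n : ℕ) (α : ℝ) (hα0 : 0 < α) (hα1 : α ≤ 1 / n)
    (ρ : ℝ) (hρ : ρ = (1 - α) / (1 + α))
    (x y z u v w : ℕ → V)
    (hx0 : x 0 = z 0) (hu0 : u 0 = 0) (hv0 : v 0 = x 0)
    (hy : ∀ k, y k = (1 / (1 + α)) • (x k + α • z k))
    (hz : ∀ k, z (k + 1) = (1 - α) • z k + α • y k + w k)
    (hx : ∀ k, x (k + 1) = y k + ((n : ℝ) * α) • (z (k + 1) - z k)
      + ((n : ℝ) * α ^ 2) • (z k - y k))
    (hu : ∀ k, u (k + 1) = u k - ((1 - (n : ℝ) * α) / (2 * ρ ^ (k + 1))) • w k)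
    (hv : ∀ k, v (k + 1) = v k + ((1 + (n : ℝ) * α) / 2) • w k) :
    ∀ k, x k = ρ ^ k • u k + v k ∧
      y k = ρ ^ (k + 1) • u k + v k ∧
      z k = -(ρ ^ k) • u k + v k := by
  have hα : 1 + α ≠ 0 := by positivity
  have hdegenerate : ρ = 0 → 1 - (n : ℝ) * α = 0 := by
    intro hρ0
    obtain rfl : α = 1 := by
      rcases div_eq_zero_iff.mp (hρ ▸ hρ0) with h | h <;> linarith
    simp [Nat.eq_one_of_one_le_one_div_cast hα1]
  have hp (k : ℕ) : ρ ^ (k + 1) • u (k + 1)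
      = ρ • (ρ ^ k • u k) - ((1 - (n : ℝ) * α) / 2) • w k := by
    rw [hu k, smul_sub, smul_smul, mul_div_mul_cancel_right_of_imp
      (fun h ↦ hdegenerate (pow_eq_zero_iff (Nat.succ_ne_zero k) |>.mp h)), pow_succ', mul_smul]
  intro k
  obtain ⟨hxk, hyk, hzk⟩ := apcg_iterates_eq_of_scaled (β := n * α) (p := fun k ↦ ρ ^ k • u k)
    hα hρ hx0 (by simp [hu0]) hv0 hy hz (fun k ↦ by rw [hx k, sq, mul_assoc]) hp hv k
  exact ⟨hxk, by rwa [pow_succ', mul_smul], by rwa [neg_smul]⟩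

/-- Equivalence of the APCG iterates with the efficient (u,v) implementation. -/
theorem stmt_13 (V : Type*) [AddCommGroup V] [Module ℝ V]
    (n : ℕ) (hn : 1 ≤ n) (α : ℝ) (hα0 : 0 < α) (hα1 : α ≤ 1 / n)
    (ρ : ℝ) (hρ : ρ = (1 - α) / (1 + α))
    (x y z u v w : ℕ → V)
    (hx0 : x 0 = z 0) (hu0 : u 0 = 0) (hv0 : v 0 = x 0)
    (hy : ∀ k, y k = (1 / (1 + α)) • (x k + α • z k))
    (hz : ∀ k, z (k + 1) = (1 - α) • z k + α • y k + w k)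
    (hx : ∀ k, x (k + 1) = y k + ((n : ℝ) * α) • (z (k + 1) - z k)
      + ((n : ℝ) * α ^ 2) • (z k - y k))
    (hu : ∀ k, u (k + 1) = u k - ((1 - (n : ℝ) * α) / (2 * ρ ^ (k + 1))) • w k)
    (hv : ∀ k, v (k + 1) = v k + ((1 + (n : ℝ) * α) / 2) • w k) :
    ∀ k, x k = ρ ^ k • u k + v k ∧
      y k = ρ ^ (k + 1) • u k + v k ∧
      z k = -(ρ ^ k) • u k + v k :=
  stmt_13_general V n α hα0 hα1 ρ hρ x y z u v w hx0 hu0 hv0 hy hz hx hu hv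
end
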